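/- Let A be a real n×n matrix and B a real m×m matrix such that -A² and -B² are both symmetric positive definite, and let T be a real m×n matrix with T·A = B·T. Then T·j(A) = j(B)·T, where j(A) = A·(-A²)^{-1/2} and j(B) = B·(-B²)^{-1/2} with (-A²)^{1/2}, (-B²)^{1/2} the unique symmetric positive definite square roots. -/

import Mathlib

/-!
With S = (-A²)^{1/2} and R = (-B²)^{1/2}, the matrix T intertwines S² and R², so
D = T S - R T solves the Sylvester equation R D + D S = 0. Pairing with D gives
tr(Dᴴ R D) + tr(D S Dᴴ) = 0, a sum of two nonnegative traces. Writing S = Xᴴ X, the second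
trace is the squared Frobenius norm of D Xᴴ, so D Xᴴ = 0, and D = 0 as S is invertible.
Thus T S = R T, hence T S⁻¹ = R⁻¹ T, and j(A), j(B) are intertwined.
-/

open scoped ComplexOrder in
noncomputable def Matrix.PosSemidef.sqrt {n : Type*} [Fintype n] [DecidableEq n] {𝕜 : Type*}
    [RCLike 𝕜] {A : Matrix n n 𝕜} (hA : A.PosSemidef) : Matrix n n 𝕜 :=
  hA.1.eigenvectorUnitary.1 * Matrix.diagonal ((↑) ∘ (√·) ∘ hA.1.eigenvalues) *
    (star hA.1.eigenvectorUnitary : Matrix n n 𝕜)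

open scoped ComplexOrder MatrixOrder

namespace Matrix

variable {m n 𝕜 : Type*} [Fintype m] [Fintype n] [RCLike 𝕜]

theorem PosSemidef.sqrt_eq_cfcSqrt [DecidableEq n] {A : Matrix n n 𝕜} (hA : A.PosSemidef) :
    hA.sqrt = CFC.sqrt A := by
  rw [CFC.sqrt_eq_cfc, cfc_nnreal_eq_real _ A, hA.1.cfc_eq]
  simp only [IsHermitian.cfc, PosSemidef.sqrt, Unitary.conjStarAlgAut_apply]
  congr 3
  funext i
  simp [hA.eigenvalues_nonneg i]

theorem PosSemidef.sqrt_mul_self [DecidableEq n] {A : Matrix n n 𝕜} (hA : A.PosSemidef) :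
    hA.sqrt * hA.sqrt = A := by
  rw [hA.sqrt_eq_cfcSqrt]
  exact CFC.sqrt_mul_sqrt_self A hA.nonneg

theorem PosSemidef.posSemidef_sqrt [DecidableEq n] {A : Matrix n n 𝕜} (hA : A.PosSemidef) :
    hA.sqrt.PosSemidef :=
  hA.sqrt_eq_cfcSqrt ▸ nonneg_iff_posSemidef.mp (CFC.sqrt_nonneg A)

theorem PosDef.posDef_sqrt [DecidableEq n] {A : Matrix n n 𝕜} (hA : A.PosDef) :
    hA.posSemidef.sqrt.PosDef :=
  hA.posSemidef.posSemidef_sqrt.posDef_iff_isUnit.mpr <|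
    isUnit_of_mul_isUnit_left (hA.posSemidef.sqrt_mul_self ▸ hA.isUnit)

theorem eq_zero_of_mul_add_mul_eq_zero [DecidableEq n] {R : Matrix m m 𝕜} {S : Matrix n n 𝕜}
    {D : Matrix m n 𝕜} (hR : R.PosSemidef) (hS : S.PosDef) (h : R * D + D * S = 0) : D = 0 := by
  have hsum : (Dᴴ * R * D).trace + (D * S * Dᴴ).trace = 0 := by
    rw [Matrix.mul_assoc, trace_mul_comm (D * S), ← trace_add, ← Matrix.mul_add, h,
      Matrix.mul_zero, trace_zero]
  have htrace : (D * S * Dᴴ).trace = 0 :=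
    ((add_eq_zero_iff_of_nonneg (hR.conjTranspose_mul_mul_same D).trace_nonneg
      (hS.posSemidef.mul_mul_conjTranspose_same D).trace_nonneg).mp hsum).2
  obtain ⟨X, rfl⟩ := CStarAlgebra.nonneg_iff_eq_star_mul_self.mp hS.posSemidef.nonneg
  have hDX : D * Xᴴ = 0 := by
    rw [← trace_mul_conjTranspose_self_eq_zero_iff, conjTranspose_mul, conjTranspose_conjTranspose]
    simpa only [star_eq_conjTranspose, Matrix.mul_assoc] using htrace
  rw [← mul_nonsing_inv_cancel_right _ D (isUnit_iff_isUnit_det _ |>.mp hS.isUnit),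
    star_eq_conjTranspose, ← Matrix.mul_assoc, hDX, Matrix.zero_mul, Matrix.zero_mul]

theorem mul_sqrt_eq_sqrt_mul_of_mul_eq_mul [DecidableEq m] [DecidableEq n] {A : Matrix n n 𝕜}
    {B : Matrix m m 𝕜} (hA : A.PosDef) (hB : B.PosSemidef) {T : Matrix m n 𝕜}
    (hT : T * A = B * T) : T * hA.posSemidef.sqrt = hB.sqrt * T := by
  rw [← sub_eq_zero]
  refine eq_zero_of_mul_add_mul_eq_zero hB.posSemidef_sqrt hA.posDef_sqrt ?_
  set S := hA.posSemidef.sqrt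
  set R := hB.sqrt
  calc R * (T * S - R * T) + (T * S - R * T) * S = T * (S * S) - R * R * T := by
        simp only [Matrix.mul_sub, Matrix.sub_mul, Matrix.mul_assoc]
        abel
    _ = 0 := by rw [hA.posSemidef.sqrt_mul_self, hB.sqrt_mul_self, hT, sub_self]

theorem mul_inv_eq_inv_mul_of_mul_eq_mul {α : Type*} [CommRing α] [DecidableEq m] [DecidableEq n]
    {S : Matrix n n α} {R : Matrix m m α} {T : Matrix m n α} (hS : IsUnit S) (hR : IsUnit R)
    (h : T * S = R * T) : T * S⁻¹ = R⁻¹ * T := by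
  rw [isUnit_iff_isUnit_det] at hS hR
  calc T * S⁻¹ = R⁻¹ * (R * T) * S⁻¹ := by rw [nonsing_inv_mul_cancel_left _ _ hR]
    _ = R⁻¹ * T := by rw [← h, Matrix.mul_assoc, mul_nonsing_inv_cancel_right _ _ hS]

end Matrix

/-- Naturality of the retraction j(A) = A·(-A²)^{-1/2}: if T intertwines A
and B (T·A = B·T), then T intertwines j(A) and j(B). -/
theorem retraction_natural
    (n m : ℕ) (A : Matrix (Fin n) (Fin n) ℝ) (B : Matrix (Fin m) (Fin m) ℝ)
    (hA : (-(A * A)).PosDef) (hB : (-(B * B)).PosDef)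
    (T : Matrix (Fin m) (Fin n) ℝ) (hT : T * A = B * T) :
    T * (A * (hA.posSemidef.sqrt)⁻¹) = (B * (hB.posSemidef.sqrt)⁻¹) * T := by
  have hsq : T * -(A * A) = -(B * B) * T := by
    rw [Matrix.mul_neg, Matrix.neg_mul, ← Matrix.mul_assoc, hT, Matrix.mul_assoc, hT,
      Matrix.mul_assoc]
  have hTS := Matrix.mul_sqrt_eq_sqrt_mul_of_mul_eq_mul hA hB.posSemidef hsq
  rw [← Matrix.mul_assoc, hT, Matrix.mul_assoc, Matrix.mul_inv_eq_inv_mul_of_mul_eq_mul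
    hA.posDef_sqrt.isUnit hB.posDef_sqrt.isUnit hTS, Matrix.mul_assoc]
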